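/- Let n ≥ 1 and let D be any subset of the distinguished vertices {a₀,…,a_n, b₀,…,b_n} of the graph Ḡ_n. For 0 ≤ j ≤ n define s_j = 1 if both a_j and b_j lie in D, s_j = −1 if neither a_j nor b_j lies in D, and s_j = 0 if exactly one of them lies in D. Then the number of perfect matchings of the induced subgraph of Ḡ_n obtained by deleting the vertices of D equals 2^{#{j : s_j = −1}} if the sequence (s₀,…,s_n) satisfies that every partial sum s₀ + ⋯ + s_m (0 ≤ m ≤ n) equals 0 or 1 and the total sum s₀ + ⋯ + s_n equals 1 (equivalently, the nonzero s_j alternate in sign beginning and ending with +1), and it equals 0 otherwise. -/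

import Mathlib

/-- The number of perfect matchings of a simple graph `G`: the number of subsets `E'`
of the edge set such that every vertex is incident to exactly one edge of `E'`. -/
noncomputable def numPM {V : Type*} (G : SimpleGraph V) : ℕ :=
  Set.ncard {E' : Set (Sym2 V) | E' ⊆ G.edgeSet ∧ ∀ v : V, ∃! e ∈ E', v ∈ e}

/-- Vertices of the graph `Ḡₙ`: distinguished vertices `a 0, …, a n`, `b 0, …, b n`,
inner vertices `c 1, …, c n` (here `c i` for `i : Fin n` stands for `c (i+1)`),
and the cap vertices `u, m` and `u', m'`. -/
inductive GbarV (n : ℕ) where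
  | a (i : Fin (n + 1))
  | b (i : Fin (n + 1))
  | c (i : Fin n)
  | u
  | m
  | u'
  | m'

/-- The edge relation of `Ḡₙ`: `u–m`, `m–a₀`, `m–b₀`, `u'–m'`, `m'–aₙ`, `m'–bₙ`, and for
each `1 ≤ i ≤ n` the four edges `cᵢ–a_{i−1}`, `cᵢ–b_{i−1}`, `cᵢ–aᵢ`, `cᵢ–bᵢ`. -/
def GbarRel (n : ℕ) : GbarV n → GbarV n → Prop := fun x y =>
  (x = GbarV.u ∧ y = GbarV.m) ∨
  (x = GbarV.m ∧ (y = GbarV.a 0 ∨ y = GbarV.b 0)) ∨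
  (x = GbarV.u' ∧ y = GbarV.m') ∨
  (x = GbarV.m' ∧ (y = GbarV.a (Fin.last n) ∨ y = GbarV.b (Fin.last n))) ∨
  (∃ i : Fin n, x = GbarV.c i ∧
    (y = GbarV.a i.castSucc ∨ y = GbarV.b i.castSucc ∨ y = GbarV.a i.succ ∨ y = GbarV.b i.succ))

/-- The graph `Ḡₙ` (one row of the Aztec diamond dual graph capped on both sides by the
inverted-Y graph). -/
def GbarGraph (n : ℕ) : SimpleGraph (GbarV n) := SimpleGraph.fromRel (GbarRel n)

/-!
A perfect matching is an involution sending every vertex to a neighbour. In `Ḡₙ − D` the caps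
force `u–m` and `u'–m'`, so a matching is the same as a bijection from `c₁, …, cₙ` onto the
surviving distinguished vertices sending `cᵢ` into column `i - 1` or `i`. Column `j` keeps
`1 - sⱼ` vertices, so counting the vertices of columns `0, …, m` in two ways shows that
`s₀ + ⋯ + sₘ` is `1` when `c_{m+1}` is matched to the right and `0` when it is matched to the left,
and that the total sum is `1`. Thus the condition is necessary and determines the column of every
`cᵢ`; conversely, when it holds, these forced columns receive exactly `1 - sⱼ` vertices each, and
the column-preserving bijections number `∏ⱼ (1 - sⱼ)!`, a factor `2` for each `sⱼ = -1`.
-/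

namespace SimpleGraph

variable {V : Type*} (G : SimpleGraph V)

def adjInvolutions : Set (V → V) :=
  {f | ∀ v, G.Adj v (f v) ∧ f (f v) = v}

def involutionEdges (f : V → V) : Set (Sym2 V) :=
  Set.range fun v => s(v, f v)

variable {G}

lemma injOn_involutionEdges : Set.InjOn involutionEdges G.adjInvolutions := by
  intro f _ g hg hfg
  funext v
  obtain ⟨w, hw⟩ : s(v, f v) ∈ involutionEdges g := hfg ▸ ⟨v, rfl⟩
  rcases Sym2.eq_iff.1 hw with ⟨rfl, h⟩ | ⟨h, rfl⟩
  · exact h.symm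
  · rw [← h, (hg w).2]

lemma exists_involutionEdges_eq {E : Set (Sym2 V)} (hE : E ⊆ G.edgeSet)
    (h : ∀ v, ∃! e ∈ E, v ∈ e) : ∃ f ∈ G.adjInvolutions, involutionEdges f = E := by
  have partner (v : V) : ∃ w, s(v, w) ∈ E ∧ ∀ e ∈ E, v ∈ e → e = s(v, w) := by
    obtain ⟨e, ⟨he, hve⟩, huniq⟩ := h v
    obtain ⟨w, rfl⟩ := Sym2.mem_iff_exists.1 hve
    exact ⟨w, he, fun e he' hv => huniq e ⟨he', hv⟩⟩
  choose f hfE hfuniq using partner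
  have hadj (v : V) : G.Adj v (f v) := hE (hfE v)
  refine ⟨f, fun v => ⟨hadj v, ?_⟩, ?_⟩
  · rcases Sym2.eq_iff.1 (hfuniq (f v) _ (hfE v) (Sym2.mem_mk_right _ _)) with ⟨h, -⟩ | ⟨h, -⟩
    · exact absurd h (hadj v).ne
    · exact h.symm
  · ext e
    refine ⟨fun ⟨v, hv⟩ => hv ▸ hfE v, fun he => ?_⟩
    induction e using Sym2.ind with
    | h x y => exact ⟨x, (hfuniq x _ he (Sym2.mem_mk_left _ _)).symm⟩

lemma involutionEdges_isPerfect {f : V → V} (hf : f ∈ G.adjInvolutions) :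
    involutionEdges f ⊆ G.edgeSet ∧ ∀ v, ∃! e ∈ involutionEdges f, v ∈ e := by
  refine ⟨Set.range_subset_iff.2 fun v => (hf v).1,
    fun v => ⟨s(v, f v), ⟨⟨v, rfl⟩, Sym2.mem_mk_left _ _⟩, ?_⟩⟩
  rintro _ ⟨⟨w, rfl⟩, hv⟩
  rcases Sym2.mem_iff.1 hv with rfl | rfl
  · rfl
  · rw [(hf w).2, Sym2.eq_swap]

theorem numPM_eq_ncard_adjInvolutions : numPM G = G.adjInvolutions.ncard := by
  have : {E : Set (Sym2 V) | E ⊆ G.edgeSet ∧ ∀ v, ∃! e ∈ E, v ∈ e} =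
      involutionEdges '' G.adjInvolutions := by
    ext E
    constructor
    · rintro ⟨hE, h⟩
      exact exists_involutionEdges_eq hE h
    · rintro ⟨f, hf, rfl⟩
      exact involutionEdges_isPerfect hf
  rw [numPM, this, injOn_involutionEdges.ncard_image]

variable (G) in
def adjInvolutionsOn (S : Set V) : Set (V → V) :=
  {f | (∀ v ∈ S, f v ∈ S ∧ G.Adj v (f v) ∧ f (f v) = v) ∧ ∀ v ∉ S, f v = v}

open Classical in
theorem ncard_adjInvolutions_induce (S : Set V) :
    (G.induce S).adjInvolutions.ncard = (G.adjInvolutionsOn S).ncard := by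
  let extend (f : S → S) (v : V) : V := if h : v ∈ S then f ⟨v, h⟩ else v
  have extend_mem (f : S → S) (v : S) : extend f v = f v := dif_pos v.2
  have extend_injective : extend.Injective := fun f g h =>
    funext fun v => Subtype.ext <| by rw [← extend_mem, ← extend_mem, h]
  rw [← extend_injective.injOn.ncard_image]
  congr 1
  ext f
  constructor
  · rintro ⟨f, hf, rfl⟩
    refine ⟨fun v hv => ?_, fun v hv => dif_neg hv⟩
    obtain ⟨hadj, hinv⟩ := hf ⟨v, hv⟩
    simp only [extend_mem _ ⟨v, hv⟩, (f _).2, extend_mem f (f _), hinv, true_and, and_true]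
    exact hadj
  · rintro ⟨hS, hid⟩
    refine ⟨fun v => ⟨f v, (hS v v.2).1⟩, fun v => ⟨(hS v v.2).2.1, Subtype.ext (hS v v.2).2.2⟩, ?_⟩
    funext v
    by_cases hv : v ∈ S
    · exact dif_pos hv
    · exact (dif_neg hv).trans (hid v hv).symm

end SimpleGraph

open Finset Nat

lemma eq_of_sum_Iic_eq {α M : Type*} [PartialOrder α] [LocallyFiniteOrderBot α] [WellFoundedLT α]
    [DecidableEq α] [AddCancelCommMonoid M] {u v : α → M}
    (h : ∀ m, ∑ j ∈ Iic m, u j = ∑ j ∈ Iic m, v j) : u = v := by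
  funext j
  induction j using WellFoundedLT.induction with
  | _ j ih =>
    have hj := h j
    rw [← Iio_insert, sum_insert notMem_Iio_self, sum_insert notMem_Iio_self,
      sum_congr rfl fun k hk => ih k (mem_Iio.1 hk)] at hj
    exact add_right_cancel hj

namespace Fin

variable {n : ℕ}

lemma card_filter_le_castSucc {f : Fin n → Fin (n + 1)}
    (hf : ∀ i, f i = i.castSucc ∨ f i = i.succ) (m : Fin n) :
    #{i | f i ≤ m.castSucc} = m + if f m = m.castSucc then 1 else 0 := by
  have hsplit : ({i | f i ≤ m.castSucc} : Finset (Fin n)) =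
      ({i | i < (m : ℕ)} : Finset (Fin n)) ∪ if f m = m.castSucc then {m} else ∅ := by
    ext i
    have hi := hf i
    split_ifs with hm <;>
      simp only [mem_filter, mem_univ, true_and, mem_union, mem_singleton, notMem_empty,
        or_false, Fin.le_def, Fin.ext_iff] at hi hm ⊢ <;> grind
  rw [hsplit, card_union_of_disjoint, card_filter_val_lt, min_eq_right m.is_lt.le] <;>
    split_ifs <;> simp

lemma sum_Iic_one_sub_card_fiber (f : Fin n → Fin (n + 1)) (m : Fin (n + 1)) :
    ∑ j ∈ Iic m, (1 - (#{i | f i = j} : ℤ)) = m + 1 - #{i | f i ≤ m} := by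
  rw [sum_sub_distrib, ← Nat.cast_sum]
  have := sum_card_fiberwise_eq_card_filter univ (Iic m) f
  simp_all

lemma sum_Iic_castSucc_one_sub_card_fiber {f : Fin n → Fin (n + 1)}
    (hf : ∀ i, f i = i.castSucc ∨ f i = i.succ) (i : Fin n) :
    ∑ j ∈ Iic i.castSucc, (1 - (#{k | f k = j} : ℤ)) = if f i = i.succ then 1 else 0 := by
  rw [sum_Iic_one_sub_card_fiber, card_filter_le_castSucc hf]
  rcases hf i with h | h <;> simp [h, Fin.ext_iff]

lemma sum_one_sub_card_fiber (f : Fin n → Fin (n + 1)) :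
    ∑ j, (1 - (#{k | f k = j} : ℤ)) = 1 := by
  rw [← Iic_top, top_eq_last, sum_Iic_one_sub_card_fiber]
  simp [le_last]

end Fin

lemma ncard_equiv_comp_eq {α β ι : Type*} [Finite α] [Finite β] [Fintype ι] [DecidableEq ι]
    (f : α → ι) (g : β → ι) (h : ∀ i, Nat.card {a // f a = i} = Nat.card {b // g b = i}) :
    {e : α ≃ β | g ∘ e = f}.ncard = ∏ i, (Nat.card {a // f a = i})! := by
  let e₀ : α ≃ β := .ofFiberEquiv fun i => (Finite.card_eq.1 (h i)).some
  have he₀ (a : α) : g (e₀ a) = f a := Equiv.ofFiberEquiv_map _ a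
  have : {e : α ≃ β | g ∘ e = f} = (fun σ : Equiv.Perm α => σ.trans e₀) '' {σ | f ∘ σ = f} := by
    ext e
    constructor
    · intro (he : g ∘ e = f)
      refine ⟨e.trans e₀.symm, funext fun a => ?_, by ext; simp⟩
      change f (e₀.symm (e a)) = f a
      rw [← he₀, Equiv.apply_symm_apply]
      exact congrFun he a
    · rintro ⟨σ, hσ : f ∘ σ = f, rfl⟩
      funext a
      change g (e₀ (σ a)) = f a
      rw [he₀]
      exact congrFun hσ a
  have trans_e₀_injective : Function.Injective fun σ : Equiv.Perm α => σ.trans e₀ :=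
    fun σ τ hστ => Equiv.ext fun a => e₀.injective (Equiv.congr_fun hστ a)
  rw [this, Set.ncard_image_of_injective _ trans_e₀_injective, DomMulAct.stabilizer_ncard]
  rfl

section Chain

variable {n : ℕ}

def IsAlternating (s : Fin (n + 1) → ℤ) : Prop :=
  (∀ m : Fin (n + 1), (∑ x ∈ Iic m, s x) = 0 ∨ (∑ x ∈ Iic m, s x) = 1) ∧ (∑ x, s x) = 1

instance : DecidablePred (IsAlternating (n := n)) := fun s => by
  unfold IsAlternating
  infer_instance

def matchedColumn (s : Fin (n + 1) → ℤ) (i : Fin n) : Fin (n + 1) :=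
  if ∑ x ∈ Iic i.castSucc, s x = 1 then i.succ else i.castSucc

lemma isAlternating_of_card_fiber {f : Fin n → Fin (n + 1)}
    (hf : ∀ i, f i = i.castSucc ∨ f i = i.succ) {s : Fin (n + 1) → ℤ}
    (hs : ∀ j, s j = 1 - #{i | f i = j}) : IsAlternating s ∧ f = matchedColumn s := by
  have hsum : ∀ m, ∑ x ∈ Iic m, s x = ∑ x ∈ Iic m, (1 - (#{i | f i = x} : ℤ)) :=
    fun m => sum_congr rfl fun j _ => hs j
  have hcast (i : Fin n) : ∑ x ∈ Iic i.castSucc, s x = if f i = i.succ then 1 else 0 := by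
    rw [hsum, Fin.sum_Iic_castSucc_one_sub_card_fiber hf]
  have htotal : ∑ x, s x = 1 := by
    simp only [hs, Fin.sum_one_sub_card_fiber]
  refine ⟨⟨fun m => ?_, htotal⟩, funext fun i => ?_⟩
  · induction m using Fin.lastCases with
    | last => rw [← Fin.top_eq_last, Iic_top, htotal]; right; rfl
    | cast i => rw [hcast]; split_ifs <;> simp
  · rw [matchedColumn, hcast]
    rcases hf i with h | h <;> simp [h, Fin.ext_iff]

lemma matchedColumn_eq_castSucc_or_succ (s : Fin (n + 1) → ℤ) (i : Fin n) :
    matchedColumn s i = i.castSucc ∨ matchedColumn s i = i.succ := by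
  unfold matchedColumn
  split_ifs <;> simp

lemma card_fiber_matchedColumn {s : Fin (n + 1) → ℤ} (hs : IsAlternating s) (j : Fin (n + 1)) :
    s j = 1 - #{i | matchedColumn s i = j} := by
  have hf := matchedColumn_eq_castSucc_or_succ s
  refine congrFun (eq_of_sum_Iic_eq (v := fun j => 1 - (#{i | matchedColumn s i = j} : ℤ))
    fun m => ?_) j
  induction m using Fin.lastCases with
  | last => rw [← Fin.top_eq_last, Iic_top, hs.2, Fin.sum_one_sub_card_fiber]
  | cast i =>
    rw [Fin.sum_Iic_castSucc_one_sub_card_fiber hf, matchedColumn]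
    rcases hs.1 i.castSucc with h | h <;> simp [h, Fin.ext_iff]

theorem ncard_equiv_adjacent {β : Type*} [Finite β] (col : β → Fin (n + 1))
    {s : Fin (n + 1) → ℤ} (hs : ∀ j, s j = 1 - Nat.card {b // col b = j}) :
    {e : Fin n ≃ β | ∀ i, col (e i) = i.castSucc ∨ col (e i) = i.succ}.ncard =
      if IsAlternating s then ∏ j, (Nat.card {b // col b = j})! else 0 := by
  have key (e : Fin n ≃ β) (he : ∀ i, col (e i) = i.castSucc ∨ col (e i) = i.succ) :
      IsAlternating s ∧ col ∘ e = matchedColumn s := by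
    refine isAlternating_of_card_fiber he fun j => ?_
    rw [hs, ← Nat.card_congr (e.subtypeEquiv fun _ => Iff.rfl), Nat.card_eq_fintype_card,
      Fintype.card_subtype]
  split_ifs with hC
  · have hfiber (j : Fin (n + 1)) :
        Nat.card {i // matchedColumn s i = j} = Nat.card {b // col b = j} := by
      have := (card_fiber_matchedColumn hC j).symm.trans (hs j)
      rw [Nat.card_eq_fintype_card, Fintype.card_subtype]
      omega
    have : {e : Fin n ≃ β | ∀ i, col (e i) = i.castSucc ∨ col (e i) = i.succ} =
        {e : Fin n ≃ β | col ∘ e = matchedColumn s} := by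
      ext e
      refine ⟨fun he => (key e he).2, fun he i => ?_⟩
      rw [← Function.comp_apply (f := col), he]
      exact matchedColumn_eq_castSucc_or_succ s i
    rw [this, ncard_equiv_comp_eq _ _ hfiber]
    simp only [hfiber]
  · have : {e : Fin n ≃ β | ∀ i, col (e i) = i.castSucc ∨ col (e i) = i.succ} = ∅ :=
      Set.eq_empty_of_forall_notMem fun e he => hC (key e he).1
    rw [this, Set.ncard_empty]

end Chain

namespace Gbar

variable {n : ℕ}

def dist : Bool × Fin (n + 1) → GbarV n
  | (true, j) => .a j
  | (false, j) => .b j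

lemma dist_injective : Function.Injective (dist (n := n)) := by
  rintro ⟨_ | _, _⟩ ⟨_ | _, _⟩ h <;> cases h <;> rfl

lemma adj_u_iff (y : GbarV n) : (GbarGraph n).Adj .u y ↔ y = .m := by
  simp only [GbarGraph, SimpleGraph.fromRel_adj, GbarRel]
  aesop

lemma adj_u'_iff (y : GbarV n) : (GbarGraph n).Adj .u' y ↔ y = .m' := by
  simp only [GbarGraph, SimpleGraph.fromRel_adj, GbarRel]
  aesop

lemma adj_c_dist_iff (i : Fin n) (x : Bool × Fin (n + 1)) :
    (GbarGraph n).Adj (.c i) (dist x) ↔ x.2 = i.castSucc ∨ x.2 = i.succ := by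
  obtain ⟨_ | _, j⟩ := x <;> simp only [dist, GbarGraph, SimpleGraph.fromRel_adj, GbarRel] <;> aesop

lemma exists_dist_of_adj_c {i : Fin n} {y : GbarV n} (h : (GbarGraph n).Adj (.c i) y) :
    ∃ x, y = dist x := by
  simp only [GbarGraph, SimpleGraph.fromRel_adj, GbarRel] at h
  aesop

lemma adj_dist {x : Bool × Fin (n + 1)} {y : GbarV n} (h : (GbarGraph n).Adj (dist x) y) :
    y = .m ∨ y = .m' ∨ ∃ i, y = .c i := by
  obtain ⟨_ | _, j⟩ := x <;> simp only [dist, GbarGraph, SimpleGraph.fromRel_adj, GbarRel] at h <;>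
    aesop

lemma eq_or_exists_dist (v : GbarV n) :
    v = .u ∨ v = .m ∨ v = .u' ∨ v = .m' ∨ (∃ i, v = .c i) ∨ ∃ x, v = dist x := by
  cases v with
  | a j => exact .inr <| .inr <| .inr <| .inr <| .inr ⟨(true, j), rfl⟩
  | b j => exact .inr <| .inr <| .inr <| .inr <| .inr ⟨(false, j), rfl⟩
  | c i => exact .inr <| .inr <| .inr <| .inr <| .inl ⟨i, rfl⟩
  | u => exact .inl rfl
  | m => exact .inr <| .inl rfl
  | u' => exact .inr <| .inr <| .inl rfl
  | m' => exact .inr <| .inr <| .inr <| .inl rfl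

def remaining (Da Db : Finset (Fin (n + 1))) : Set (GbarV n) :=
  {v | ¬ ((∃ j ∈ Da, v = GbarV.a j) ∨ (∃ j ∈ Db, v = GbarV.b j))}

def remainingDist (Da Db : Finset (Fin (n + 1))) : Set (Bool × Fin (n + 1)) :=
  dist ⁻¹' remaining Da Db

variable {Da Db : Finset (Fin (n + 1))}

@[simp] lemma u_mem_remaining : .u ∈ remaining (n := n) Da Db := by simp [remaining]
@[simp] lemma m_mem_remaining : .m ∈ remaining (n := n) Da Db := by simp [remaining]
@[simp] lemma u'_mem_remaining : .u' ∈ remaining (n := n) Da Db := by simp [remaining]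
@[simp] lemma m'_mem_remaining : .m' ∈ remaining (n := n) Da Db := by simp [remaining]
@[simp] lemma c_mem_remaining (i : Fin n) : .c i ∈ remaining Da Db := by simp [remaining]

section Involution

variable {f : GbarV n → GbarV n} (hf : f ∈ (GbarGraph n).adjInvolutionsOn (remaining Da Db))
include hf

lemma apply_u : f .u = .m :=
  (adj_u_iff _).1 (hf.1 _ u_mem_remaining).2.1

lemma apply_m : f .m = .u := by
  rw [← apply_u hf, (hf.1 _ u_mem_remaining).2.2]

lemma apply_u' : f .u' = .m' :=
  (adj_u'_iff _).1 (hf.1 _ u'_mem_remaining).2.1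

lemma apply_m' : f .m' = .u' := by
  rw [← apply_u' hf, (hf.1 _ u'_mem_remaining).2.2]

lemma exists_apply_c_eq_dist (i : Fin n) : ∃ x ∈ remainingDist Da Db,
    f (.c i) = dist x ∧ (x.2 = i.castSucc ∨ x.2 = i.succ) := by
  obtain ⟨hmem, hadj, -⟩ := hf.1 _ (c_mem_remaining i)
  obtain ⟨x, hx⟩ := exists_dist_of_adj_c hadj
  rw [hx] at hmem hadj
  exact ⟨x, hmem, hx, (adj_c_dist_iff i x).1 hadj⟩

lemma exists_apply_dist_eq_c {x : Bool × Fin (n + 1)} (hx : x ∈ remainingDist Da Db) :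
    ∃ i, f (dist x) = .c i := by
  obtain ⟨-, hadj, hinv⟩ := hf.1 _ hx
  rcases adj_dist hadj with h | h | h
  · rw [h, apply_m hf] at hinv
    cases x with | mk l j => cases l <;> cases hinv
  · rw [h, apply_m' hf] at hinv
    cases x with | mk l j => cases l <;> cases hinv
  · exact h

end Involution


open Classical in
noncomputable def cPartner (e : Fin n ≃ remainingDist Da Db) (x : Bool × Fin (n + 1)) : GbarV n :=
  if h : x ∈ remainingDist Da Db then .c (e.symm ⟨x, h⟩) else dist x

noncomputable def involutionOf (e : Fin n ≃ remainingDist Da Db) : GbarV n → GbarV n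
  | .u => .m
  | .m => .u
  | .u' => .m'
  | .m' => .u'
  | .c i => dist (e i)
  | .a j => cPartner e (true, j)
  | .b j => cPartner e (false, j)

lemma involutionOf_dist (e : Fin n ≃ remainingDist Da Db) (x : Bool × Fin (n + 1)) :
    involutionOf e (dist x) = cPartner e x := by
  obtain ⟨_ | _, j⟩ := x <;> rfl

lemma involutionOf_injective : (involutionOf (Da := Da) (Db := Db)).Injective :=
  fun _ _ h => Equiv.ext fun i => Subtype.ext <| dist_injective (congrFun h (.c i))

lemma involutionOf_mem {e : Fin n ≃ remainingDist Da Db}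
    (he : ∀ i, (e i).1.2 = i.castSucc ∨ (e i).1.2 = i.succ) :
    involutionOf e ∈ (GbarGraph n).adjInvolutionsOn (remaining Da Db) := by
  have adj_c (i : Fin n) : (GbarGraph n).Adj (.c i) (dist (e i)) := (adj_c_dist_iff _ _).2 (he i)
  refine ⟨fun v hv => ?_, fun v hv => ?_⟩
  · rcases eq_or_exists_dist v with rfl | rfl | rfl | rfl | ⟨i, rfl⟩ | ⟨x, rfl⟩
    · exact ⟨m_mem_remaining, (adj_u_iff _).2 rfl, rfl⟩
    · exact ⟨u_mem_remaining, ((adj_u_iff _).2 rfl).symm, rfl⟩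
    · exact ⟨m'_mem_remaining, (adj_u'_iff _).2 rfl, rfl⟩
    · exact ⟨u'_mem_remaining, ((adj_u'_iff _).2 rfl).symm, rfl⟩
    · refine ⟨(e i).2, adj_c i, ?_⟩
      rw [involutionOf, involutionOf_dist, cPartner, dif_pos (e i).2]
      simp
    · have hx : x ∈ remainingDist Da Db := hv
      have hk : (e (e.symm ⟨x, hx⟩)).1 = x := by simp
      rw [involutionOf_dist, cPartner, dif_pos hx]
      refine ⟨c_mem_remaining _, ?_, ?_⟩
      · simpa [hk] using (adj_c (e.symm ⟨x, hx⟩)).symm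
      · simp [involutionOf]
  · obtain ⟨x, rfl⟩ : ∃ x, v = dist x := by
      rcases eq_or_exists_dist v with rfl | rfl | rfl | rfl | ⟨i, rfl⟩ | h <;> simp_all
    exact (involutionOf_dist e x).trans (dif_neg hv)

lemma exists_involutionOf_eq {f : GbarV n → GbarV n}
    (hf : f ∈ (GbarGraph n).adjInvolutionsOn (remaining Da Db)) :
    ∃ e : Fin n ≃ remainingDist Da Db,
      (∀ i, (e i).1.2 = i.castSucc ∨ (e i).1.2 = i.succ) ∧ involutionOf e = f := by
  choose q hq_mem hq hq_adj using exists_apply_c_eq_dist hf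
  have hinv_c (i : Fin n) : f (dist (q i)) = .c i := by
    rw [← hq, (hf.1 _ (c_mem_remaining i)).2.2]
  have hq_of {x : Bool × Fin (n + 1)} (hx : x ∈ remainingDist Da Db) {i : Fin n}
      (h : f (dist x) = .c i) : q i = x :=
    dist_injective <| by rw [← hq, ← h, (hf.1 _ hx).2.2]
  let e := Equiv.ofBijective (fun i => (⟨q i, hq_mem i⟩ : remainingDist Da Db))
    ⟨fun i k hik => GbarV.c.inj <| by
      rw [← hinv_c i, ← hinv_c k]
      exact congrArg (fun y => f (dist y.1)) hik,
    fun ⟨x, hx⟩ => by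
      obtain ⟨i, hi⟩ := exists_apply_dist_eq_c hf hx
      exact ⟨i, Subtype.ext (hq_of hx hi)⟩⟩
  refine ⟨e, hq_adj, funext fun v => ?_⟩
  rcases eq_or_exists_dist v with rfl | rfl | rfl | rfl | ⟨i, rfl⟩ | ⟨x, rfl⟩
  · exact (apply_u hf).symm
  · exact (apply_m hf).symm
  · exact (apply_u' hf).symm
  · exact (apply_m' hf).symm
  · exact (hq i).symm
  · rw [involutionOf_dist, cPartner]
    split_ifs with hx
    · obtain ⟨i, hi⟩ := exists_apply_dist_eq_c hf hx
      rw [hi, e.symm_apply_eq.2 (Subtype.ext (hq_of hx hi).symm)]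
    · exact (hf.2 _ hx).symm

theorem ncard_adjInvolutionsOn_remaining :
    ((GbarGraph n).adjInvolutionsOn (remaining Da Db)).ncard =
      {e : Fin n ≃ remainingDist Da Db |
        ∀ i, (e i).1.2 = i.castSucc ∨ (e i).1.2 = i.succ}.ncard := by
  rw [← Set.ncard_image_of_injective _ involutionOf_injective]
  congr 1
  ext f
  constructor
  · intro hf
    obtain ⟨e, he, rfl⟩ := exists_involutionOf_eq hf
    exact ⟨e, he, rfl⟩
  · rintro ⟨e, he, rfl⟩
    exact involutionOf_mem he

lemma card_remainingDist_fiber (j : Fin (n + 1)) :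
    Nat.card {x : remainingDist Da Db // x.1.2 = j} =
      (if j ∈ Da then 0 else 1) + (if j ∈ Db then 0 else 1) := by
  let e : {x : remainingDist Da Db // x.1.2 = j} ≃ {l : Bool // (l, j) ∈ remainingDist Da Db} :=
    { toFun := fun x => ⟨x.1.1.1, by obtain ⟨⟨⟨l, _⟩, h⟩, rfl⟩ := x; exact h⟩
      invFun := fun l => ⟨⟨(l.1, j), l.2⟩, rfl⟩
      left_inv := by rintro ⟨⟨⟨l, _⟩, h⟩, rfl⟩; rfl
      right_inv := fun _ => rfl }
  classical
  rw [Nat.card_congr e, Nat.card_eq_fintype_card, Fintype.card_subtype]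
  have hmem (l : Bool) : (l, j) ∈ remainingDist Da Db ↔ j ∉ cond l Da Db := by
    cases l <;> simp [remainingDist, remaining, dist]
  simp only [hmem, Finset.card_filter, Fintype.sum_bool, cond_true, cond_false, ite_not]

lemma prod_factorial_card_remainingDist_fiber {s : Fin (n + 1) → ℤ}
    (hs : ∀ j, s j = (if j ∈ Da then 1 else 0) + (if j ∈ Db then 1 else 0) - 1) :
    ∏ j, (Nat.card {x : remainingDist Da Db // x.1.2 = j})! = 2 ^ #{j | s j = -1} := by
  rw [← prod_const, prod_filter]
  refine prod_congr rfl fun j _ => ?_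
  rw [card_remainingDist_fiber, hs]
  split_ifs <;> simp_all

end Gbar

theorem Gbar_matchings_general (n : ℕ)
    (Da Db : Finset (Fin (n + 1)))
    (s : Fin (n + 1) → ℤ)
    (hs : ∀ j, s j = (if j ∈ Da then 1 else 0) + (if j ∈ Db then 1 else 0) - 1) :
    numPM ((GbarGraph n).induce
        {v | ¬ ((∃ j ∈ Da, v = GbarV.a j) ∨ (∃ j ∈ Db, v = GbarV.b j))}) =
      if (∀ m : Fin (n + 1),
            (∑ x ∈ Finset.Iic m, s x) = 0 ∨ (∑ x ∈ Finset.Iic m, s x) = 1) ∧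
          (∑ x, s x) = 1
      then 2 ^ (Finset.univ.filter fun j => s j = -1).card
      else 0 := by
  have hfiber (j : Fin (n + 1)) :
      s j = 1 - Nat.card {x : Gbar.remainingDist Da Db // x.1.2 = j} := by
    rw [hs, Gbar.card_remainingDist_fiber]
    split_ifs <;> norm_num
  change numPM ((GbarGraph n).induce (Gbar.remaining Da Db)) = _
  rw [SimpleGraph.numPM_eq_ncard_adjInvolutions, SimpleGraph.ncard_adjInvolutions_induce,
    Gbar.ncard_adjInvolutionsOn_remaining, ncard_equiv_adjacent _ hfiber,
    Gbar.prod_factorial_card_remainingDist_fiber hs]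
  rfl

/-- Let `D` be a subset of the distinguished vertices of `Ḡₙ`, recorded by the index
sets `Da = {j | a j ∈ D}` and `Db = {j | b j ∈ D}`.  With `s j = 1` if both `a j` and
`b j` lie in `D`, `s j = −1` if neither does, and `s j = 0` if exactly one does, the
number of perfect matchings of `Ḡₙ − D` is `2^{#{j | s j = −1}}` if every partial sum of
`(s 0, …, s n)` is `0` or `1` and the total sum is `1`, and `0` otherwise. -/
theorem Gbar_matchings (n : ℕ) (hn : 1 ≤ n)
    (Da Db : Finset (Fin (n + 1)))
    (s : Fin (n + 1) → ℤ)
    (hs : ∀ j, s j = (if j ∈ Da then 1 else 0) + (if j ∈ Db then 1 else 0) - 1) :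
    numPM ((GbarGraph n).induce
        {v | ¬ ((∃ j ∈ Da, v = GbarV.a j) ∨ (∃ j ∈ Db, v = GbarV.b j))}) =
      if (∀ m : Fin (n + 1),
            (∑ x ∈ Finset.Iic m, s x) = 0 ∨ (∑ x ∈ Finset.Iic m, s x) = 1) ∧
          (∑ x, s x) = 1
      then 2 ^ (Finset.univ.filter fun j => s j = -1).card
      else 0 :=
  Gbar_matchings_general n Da Db s hs
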